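/- For a discrete distribution supported on x_1 ≤ ... ≤ x_n with weights π_1,...,π_n summing to 1, the r-th L-moment equals Σ_{i=1}^n [K_r(Σ_{a≤i} π_a) - K_r(Σ_{a≤i-1} π_a)] x_i, where K_r(t) = ∫_0^t L_{r-1}(u) du. -/

import Mathlib

open MeasureTheory Set

/-- The shifted Legendre polynomial of order `m`. -/
def shiftedLegendre (m : ℕ) (t : ℝ) : ℝ :=
  ∑ k ∈ Finset.range (m + 1),
    (-1 : ℝ) ^ k * (Nat.choose m k : ℝ) ^ 2 * t ^ (m - k) * (1 - t) ^ k

/-- The integrated shifted Legendre polynomial `K_r(t) = ∫_0^t L_{r-1}(u) du`. -/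
noncomputable def intShiftedLegendre (r : ℕ) (t : ℝ) : ℝ :=
  ∫ u in (0:ℝ)..t, shiftedLegendre (r - 1) u

lemma shiftedLegendre_continuous (m : ℕ) : Continuous (shiftedLegendre m) := by
  unfold shiftedLegendre
  apply continuous_finset_sum
  intro k _
  continuity

/-- For a discrete distribution supported on `x_1 ≤ ... ≤ x_n` with weights `π_i` summing
to `1`, with quantile function `Q_π`, the `r`-th L-moment
`λ_r = ∫_0^1 L_{r-1}(t) Q_π(t) dt` equals
`∑_i [K_r(π_1 + ... + π_i) - K_r(π_1 + ... + π_{i-1})] x_i`. -/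
theorem discrete_lmoment_formula
    (n : ℕ) (hn : 0 < n) (r : ℕ) (hr : 1 ≤ r)
    (x : Fin n → ℝ) (hx : Monotone x)
    (π : Fin n → ℝ) (hπ : ∀ i, 0 ≤ π i) (hsum : ∑ i, π i = 1)
    (c : ℕ → ℝ)
    (hc : ∀ m, c m = ∑ a ∈ Finset.univ.filter (fun a : Fin n => (a : ℕ) < m), π a)
    (Q : ℝ → ℝ)
    (hQ : ∀ (i : Fin n) (t : ℝ), c i < t → t ≤ c (i + 1) → Q t = x i) :
    ∫ t in Ioo (0:ℝ) 1, shiftedLegendre (r - 1) t * Q t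
      = ∑ i : Fin n, (intShiftedLegendre r (c (i + 1)) - intShiftedLegendre r (c i)) * x i := by
  classical
  set L : ℝ → ℝ := shiftedLegendre (r - 1) with hL
  have hLcont : Continuous L := shiftedLegendre_continuous (r - 1)
  -- basic facts about c
  have hmono : ∀ m m' : ℕ, m ≤ m' → c m ≤ c m' := by
    intro m m' h
    rw [hc, hc]
    apply Finset.sum_le_sum_of_subset_of_nonneg
    · intro a ha
      simp only [Finset.mem_filter] at *
      exact ⟨ha.1, lt_of_lt_of_le ha.2 h⟩
    · intro a _ _; exact hπ a
  have hc0 : c 0 = 0 := by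
    rw [hc]
    apply Finset.sum_eq_zero
    intro a ha
    simp at ha
  have hcn : c n = 1 := by
    rw [hc, ← hsum]
    apply Finset.sum_congr _ (fun _ _ => rfl)
    ext a
    simp [a.isLt]
  -- the intervals
  set s : Fin n → Set ℝ := fun i => Ioc (c i) (c (i + 1)) with hs
  have hmeas : ∀ i : Fin n, MeasurableSet (s i) := fun i => measurableSet_Ioc
  have hcover : Ioc (0:ℝ) 1 = ⋃ i : Fin n, s i := by
    ext t
    simp only [mem_Ioc, mem_iUnion, hs]
    constructor
    · rintro ⟨ht0, ht1⟩
      set F : Finset ℕ := (Finset.range n).filter (fun k => c k < t) with hF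
      have hFne : F.Nonempty := ⟨0, by simp [hF, hn, hc0, ht0]⟩
      set i := F.max' hFne with hi
      have hiF : i ∈ F := F.max'_mem hFne
      have hin : i < n := by
        have := (Finset.mem_filter.mp hiF).1; simpa using this
      have hci : c i < t := (Finset.mem_filter.mp hiF).2
      refine ⟨⟨i, hin⟩, hci, ?_⟩
      by_cases hsucc : i + 1 = n
      · rw [hsucc, hcn]; exact ht1
      · have hin' : i + 1 < n := lt_of_le_of_ne hin hsucc
        by_contra hlt
        push_neg at hlt
        have : i + 1 ∈ F := Finset.mem_filter.mpr ⟨Finset.mem_range.mpr hin', hlt⟩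
        have := F.le_max' _ this
        omega
    · rintro ⟨i, h1, h2⟩
      constructor
      · calc (0:ℝ) = c 0 := hc0.symm
          _ ≤ c i := hmono 0 i (Nat.zero_le _)
          _ < t := h1
      · calc t ≤ c (i + 1) := h2
          _ ≤ c n := hmono _ n i.isLt
          _ = 1 := hcn
  -- disjointness
  have key : ∀ i j : Fin n, (i : ℕ) < (j : ℕ) → Disjoint (s i) (s j) := by
    intro i j h
    apply Set.disjoint_left.mpr
    intro t hti htj
    have h1 : t ≤ c (↑i + 1) := hti.2
    have h2 : c ↑j < t := htj.1
    have h3 : c (↑i + 1) ≤ c ↑j := hmono _ _ (by omega)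
    linarith
  have hdisj : Set.Pairwise (↑(Finset.univ : Finset (Fin n))) (Function.onFun Disjoint s) := by
    intro i _ j _ hij
    rcases Nat.lt_or_ge (i : ℕ) (j : ℕ) with h | h
    · exact key i j h
    · have h' : (j : ℕ) < (i : ℕ) := by
        rcases Nat.lt_or_ge (j : ℕ) (i : ℕ) with h' | h'
        · exact h'
        · exact absurd (Fin.ext (by omega)) hij
      exact (key j i h').symm
  -- integrability on each piece
  have hint : ∀ i : Fin n, IntegrableOn (fun t => L t * Q t) (s i) := by
    intro i
    apply IntegrableOn.congr_fun (f := fun t => L t * x i)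
    · exact ((hLcont.mul continuous_const)).integrableOn_Ioc
    · intro t ht
      simp only [hQ i t ht.1 ht.2]
    · exact hmeas i
  -- main computation
  have hcover' : Ioc (0:ℝ) 1 = ⋃ i ∈ (Finset.univ : Finset (Fin n)), s i := by
    rw [hcover]; simp
  rw [← integral_Ioc_eq_integral_Ioo, hcover',
    integral_biUnion_finset Finset.univ (fun i _ => hmeas i) hdisj (fun i _ => hint i)]
  apply Finset.sum_congr rfl
  intro i _
  have hab : c i ≤ c (i + 1) := hmono _ _ (by omega)
  have heq : ∫ t in s i, L t * Q t = ∫ t in s i, L t * x i := by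
    apply setIntegral_congr_fun (hmeas i)
    intro t ht
    simp only [hQ i t ht.1 ht.2]
  rw [heq]
  have : ∫ t in s i, L t * x i = (∫ t in s i, L t) * x i := by
    rw [integral_mul_const]
  rw [this]
  congr 1
  have h1 : ∫ t in s i, L t = ∫ t in (c i)..(c (i+1)), L t := by
    rw [intervalIntegral.integral_of_le hab]
  rw [h1]
  unfold intShiftedLegendre
  rw [← hL]
  rw [intervalIntegral.integral_interval_sub_left
    (hLcont.intervalIntegrable _ _) (hLcont.intervalIntegrable _ _)]
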